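/- If the teacher is perfectly accurate in the sense that G(X_1, f̂(X_1)) = G(X_1, Y_1) almost surely, then with probability at least 1 − δ the doubly robust gradient satisfies ‖G_DR‖₂ ≤ √(E[‖G(X_1, Y_1)‖₂²] / ((m+n)·δ)); i.e., the effective sample size is m+n rather than n. -/

import Mathlib

/-!
Perfect accuracy of the teacher makes the correction term of `G_DR` vanish almost surely, so
`G_DR` is the plain average of the `m + n` i.i.d. mean-zero vectors `G(Xᵢ, Yᵢ)`. Independence
kills the cross terms of `E‖∑ᵢ G(Xᵢ, Yᵢ)‖²`, so this average has second moment
`E‖G(X₁, Y₁)‖² / (m + n)`, and Chebyshev's inequality gives the bound.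
-/

open MeasureTheory ProbabilityTheory Finset
open scoped ENNReal RealInnerProductSpace

section

variable {Ω E ι : Type*} [MeasurableSpace Ω] {μ : Measure Ω}
  [NormedAddCommGroup E] [InnerProductSpace ℝ E] [CompleteSpace E]
  [MeasurableSpace E] [BorelSpace E]

theorem integral_norm_sum_sq_of_pairwise_indepFun [IsFiniteMeasure μ] {s : Finset ι}
    {Z : ι → Ω → E} (hZ : ∀ i ∈ s, MemLp (Z i) 2 μ)
    (hindep : (s : Set ι).Pairwise fun i j => Z i ⟂ᵢ[μ] Z j) (hmean : ∀ i ∈ s, μ[Z i] = 0) :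
    ∫ ω, ‖∑ i ∈ s, Z i ω‖ ^ 2 ∂μ = ∑ i ∈ s, ∫ ω, ‖Z i ω‖ ^ 2 ∂μ := by
  have hint : ∀ i ∈ s, ∀ j ∈ s, Integrable (fun ω => ⟪Z i ω, Z j ω⟫) μ := fun i hi j hj =>
    memLp_one_iff_integrable.1 <| (innerSL ℝ).memLp_of_bilin 1 (hZ i hi) (hZ j hj)
  have hcross : ∀ i ∈ s, ∀ j ∈ s, i ≠ j → ∫ ω, ⟪Z i ω, Z j ω⟫ ∂μ = 0 := fun i hi j hj hij => by
    have := (hindep hi hj hij).integral_bilin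
      ((hZ i hi).integrable one_le_two) ((hZ j hj).integrable one_le_two) (innerSL ℝ)
    rw [hmean i hi, map_zero, zero_apply] at this
    exact this
  calc ∫ ω, ‖∑ i ∈ s, Z i ω‖ ^ 2 ∂μ = ∫ ω, ∑ i ∈ s, ∑ j ∈ s, ⟪Z i ω, Z j ω⟫ ∂μ := by
        simp_rw [← real_inner_self_eq_norm_sq, sum_inner, inner_sum]
    _ = ∑ i ∈ s, ∑ j ∈ s, ∫ ω, ⟪Z i ω, Z j ω⟫ ∂μ := by
        rw [integral_finsetSum _ fun i hi => integrable_finsetSum _ fun j hj => hint i hi j hj]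
        exact sum_congr rfl fun i hi => integral_finsetSum _ fun j hj => hint i hi j hj
    _ = ∑ i ∈ s, ∫ ω, ⟪Z i ω, Z i ω⟫ ∂μ := sum_congr rfl fun i hi =>
        sum_eq_single_of_mem i hi fun j hj hji => hcross i hi j hj hji.symm
    _ = ∑ i ∈ s, ∫ ω, ‖Z i ω‖ ^ 2 ∂μ := by simp_rw [real_inner_self_eq_norm_sq]

theorem ofReal_one_sub_le_measure_norm_le_sqrt {F : Type*} [SeminormedAddGroup F]
    [IsProbabilityMeasure μ] {V : Ω → F}
    (hV : Integrable (fun ω => ‖V ω‖ ^ 2) μ) {δ : ℝ} (hδ : 0 < δ) :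
    ENNReal.ofReal (1 - δ) ≤ μ {ω | ‖V ω‖ ≤ √((∫ ω, ‖V ω‖ ^ 2 ∂μ) / δ)} := by
  set t := √((∫ ω, ‖V ω‖ ^ 2 ∂μ) / δ)
  suffices μ {ω | ‖V ω‖ ≤ t}ᶜ ≤ ENNReal.ofReal δ by
    calc ENNReal.ofReal (1 - δ) = μ Set.univ - ENNReal.ofReal δ := by
          rw [measure_univ, ENNReal.ofReal_sub _ hδ.le, ENNReal.ofReal_one]
      _ ≤ μ {ω | ‖V ω‖ ≤ t} := by
          rw [tsub_le_iff_right, ← Set.union_compl_self {ω | ‖V ω‖ ≤ t}]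
          exact (measure_union_le _ _).trans (add_le_add_right this _)
  rcases (integral_nonneg fun ω => sq_nonneg ‖V ω‖ : 0 ≤ ∫ ω, ‖V ω‖ ^ 2 ∂μ).eq_or_lt
    with h0 | hpos
  · have hV0 : ∀ᵐ ω ∂μ, ‖V ω‖ ^ 2 = 0 :=
      (integral_eq_zero_iff_of_nonneg (fun ω => sq_nonneg _) hV).1 h0.symm
    refine le_of_eq_of_le (measure_eq_zero_iff_ae_notMem.2 ?_) bot_le
    filter_upwards [hV0] with ω hω
    simp only [pow_eq_zero_iff two_ne_zero] at hω
    simp only [Set.mem_compl_iff, Set.mem_ofPred_eq, not_not, hω]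
    exact Real.sqrt_nonneg _
  · have ht : 0 < t ^ 2 := by positivity
    have hmarkov :=
      mul_meas_ge_le_integral_of_nonneg (.of_forall fun ω => sq_nonneg ‖V ω‖) hV (t ^ 2)
    have hsub : {ω | ‖V ω‖ ≤ t}ᶜ ⊆ {ω | t ^ 2 ≤ ‖V ω‖ ^ 2} := fun ω hω =>
      pow_le_pow_left₀ (Real.sqrt_nonneg _) (not_le.1 (Set.notMem_ofPred_iff.1 hω)).le 2
    have ht_sq : t ^ 2 * δ = ∫ ω, ‖V ω‖ ^ 2 ∂μ := by
      rw [Real.sq_sqrt (div_pos hpos hδ).le, div_mul_cancel₀ _ hδ.ne']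
    refine (measure_mono hsub).trans
      ((ENNReal.le_ofReal_iff_toReal_le (measure_ne_top μ _) hδ.le).2 ?_)
    rw [← measureReal_def]
    exact le_of_mul_le_mul_left (hmarkov.trans_eq ht_sq.symm) ht

theorem ofReal_one_sub_le_measure_norm_average_le [IsProbabilityMeasure μ] [Fintype ι]
    {Z : ι → Ω → E} {Z₀ : Ω → E} (hindep : Pairwise fun i j => Z i ⟂ᵢ[μ] Z j)
    (hident : ∀ i, IdentDistrib (Z i) Z₀ μ μ) (h2 : MemLp Z₀ 2 μ) (hmean : μ[Z₀] = 0)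
    {δ : ℝ} (hδ : 0 < δ) :
    ENNReal.ofReal (1 - δ) ≤ μ {ω | ‖(Fintype.card ι : ℝ)⁻¹ • ∑ i, Z i ω‖
      ≤ √((∫ ω, ‖Z₀ ω‖ ^ 2 ∂μ) / (Fintype.card ι * δ))} := by
  set N : ℝ := (Fintype.card ι : ℝ)
  have hZ2 : ∀ i, MemLp (Z i) 2 μ := fun i => (hident i).memLp_iff.2 h2
  have hsum : ∫ ω, ‖∑ i, Z i ω‖ ^ 2 ∂μ = N * ∫ ω, ‖Z₀ ω‖ ^ 2 ∂μ := by
    rw [integral_norm_sum_sq_of_pairwise_indepFun (fun i _ => hZ2 i)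
      (fun i _ j _ hij => hindep hij) (fun i _ => (hident i).integral_eq.trans hmean)]
    have hsq (i : ι) : ∫ ω, ‖Z i ω‖ ^ 2 ∂μ = ∫ ω, ‖Z₀ ω‖ ^ 2 ∂μ :=
      ((hident i).comp (measurable_norm.pow_const 2)).integral_eq
    simp only [hsq, sum_const, card_univ, nsmul_eq_mul, N]
  have hV := (memLp_finsetSum univ fun i _ => hZ2 i).const_smul N⁻¹
  have hmoment : (∫ ω, ‖N⁻¹ • ∑ i, Z i ω‖ ^ 2 ∂μ) / δ = (∫ ω, ‖Z₀ ω‖ ^ 2 ∂μ) / (N * δ) := by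
    simp_rw [norm_smul, mul_pow, integral_const_mul, hsum, Real.norm_eq_abs, sq_abs]
    rcases eq_or_ne N 0 with hN | hN
    · simp [hN]
    · field_simp
  rw [← hmoment]
  exact ofReal_one_sub_le_measure_norm_le_sqrt ((memLp_two_iff_integrable_sq_norm hV.1).1 hV) hδ

end

/-- If the teacher is perfectly accurate, i.e. `G(X₁, f̂(X₁)) = G(X₁, Y₁)` almost surely,
then with probability at least `1 − δ` the doubly robust gradient satisfies
`‖G_DR‖₂ ≤ √(E[‖G(X₁,Y₁)‖²]/((m+n)δ))`: the effective sample size is `m+n`. -/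
theorem doubly_robust_gradient_bound_perfect_teacher
    {Ω : Type*} [MeasurableSpace Ω] (μ : Measure Ω) [IsProbabilityMeasure μ]
    {𝒳 𝒴 : Type*} [MeasurableSpace 𝒳] [MeasurableSpace 𝒴]
    (m n d : ℕ) (hn : 0 < n)
    (δ : ℝ) (hδ0 : 0 < δ)
    (X : Fin (m + n) → Ω → 𝒳) (Y : Fin (m + n) → Ω → 𝒴)
    (h_indep : iIndepFun
      (fun i ω => (X i ω, Y i ω)) μ)
    (h_ident : ∀ i : Fin (m + n),
      IdentDistrib (fun ω => (X i ω, Y i ω))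
        (fun ω => (X ⟨0, by omega⟩ ω, Y ⟨0, by omega⟩ ω)) μ μ)
    (f : 𝒳 → 𝒴) (hf : Measurable f)
    (G : 𝒳 × 𝒴 → EuclideanSpace ℝ (Fin d)) (hG : Measurable G)
    (hGY2 : MemLp (fun ω => G (X ⟨0, by omega⟩ ω, Y ⟨0, by omega⟩ ω)) 2 μ)
    (hopt : (∫ ω, G (X ⟨0, by omega⟩ ω, Y ⟨0, by omega⟩ ω) ∂μ) = 0)
    (haccurate : ∀ᵐ ω ∂μ,
      G (X ⟨0, by omega⟩ ω, f (X ⟨0, by omega⟩ ω))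
        = G (X ⟨0, by omega⟩ ω, Y ⟨0, by omega⟩ ω)) :
    ENNReal.ofReal (1 - δ) ≤
      μ {ω | ‖((m + n : ℝ))⁻¹ • (∑ i : Fin (m + n), G (X i ω, f (X i ω)))
          + ((n : ℝ))⁻¹ • ∑ i ∈ Finset.univ.filter (fun i : Fin (m + n) => m ≤ (i : ℕ)),
              (G (X i ω, Y i ω) - G (X i ω, f (X i ω)))‖
        ≤ Real.sqrt ((∫ ω, ‖G (X ⟨0, by omega⟩ ω, Y ⟨0, by omega⟩ ω)‖ ^ 2 ∂μ)
            / ((m + n : ℝ) * δ))} := by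
  have hchebyshev := ofReal_one_sub_le_measure_norm_average_le
    (Z := fun i ω => G (X i ω, Y i ω)) (fun i j hij => (h_indep.indepFun hij).comp hG hG)
    (fun i => (h_ident i).comp hG) hGY2 hopt hδ0
  have hteacher : ∀ᵐ ω ∂μ, ∀ i, G (X i ω, f (X i ω)) = G (X i ω, Y i ω) :=
    ae_all_iff.2 fun i => (h_ident i).symm.ae_snd (p := fun q => G (q.1, f q.1) = G q)
      (measurableSet_eq_fun (hG.comp (measurable_fst.prodMk (hf.comp measurable_fst))) hG)
      haccurate
  refine hchebyshev.trans (measure_mono_ae ?_)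
  filter_upwards [hteacher] with ω hω hbound
  change _ ≤ _ at hbound ⊢
  simpa [hω] using hbound
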